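/- arXiv:1909.03975 — 3 statements merged into one kernel-verified Lean document; each statement's English description precedes it below -/
import Mathlib

section
/- Let F : ℕ → ℝ^D admit a limiting natural distribution μ. If μ({x : x_d = α_d}) = 0 for each 1 ≤ d ≤ D, then the natural density of {k ∈ ℕ : F(k)_1 > α_1, …, F(k)_D > α_D} exists and equals μ({x ∈ ℝ^D : x_1 > α_1, …, x_D > α_D}). -/
open MeasureTheory Filter Topology

open scoped ENNReal

/-!
The Cesàro averages of `g ∘ F` are the integrals of `g` against the empirical measures
`(1 / X) ∑_{k < X} δ_{F k}`, so the hypothesis says that these converge weakly to `μ` (bounded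
Lipschitz test functions determine weak convergence). By the portmanteau theorem the empirical
measures of the open orthant `{x | ∀ d, α d < x d}` then converge to its `μ`-measure, because its
frontier lies in the union of the `μ`-null hyperplanes `x d = α d`.
-/

section

variable {Ω : Type*} [MeasurableSpace Ω]

/-- Indexed by `n` rather than by the number `n + 1` of points, so that it is a probability
measure. -/
noncomputable def empiricalMeasure (F : ℕ → Ω) (n : ℕ) : ProbabilityMeasure Ω :=
  ⟨((n + 1 : ℕ) : ℝ≥0∞)⁻¹ • ∑ k ∈ Finset.range (n + 1), Measure.dirac (F k), by
    constructor
    simp only [Measure.smul_apply, Measure.coe_finsetSum, Finset.sum_apply, measure_univ,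
      Finset.sum_const, Finset.card_range, nsmul_eq_mul, mul_one, smul_eq_mul]
    exact ENNReal.inv_mul_cancel (by positivity) (by simp)⟩

lemma integral_empiricalMeasure (F : ℕ → Ω) (n : ℕ) {g : Ω → ℝ} (hg : StronglyMeasurable g) :
    ∫ x, g x ∂(empiricalMeasure F n : Measure Ω) =
      (1 / ((n + 1 : ℕ) : ℝ)) * ∑ k ∈ Finset.range (n + 1), g (F k) := by
  rw [empiricalMeasure, ProbabilityMeasure.coe_mk, integral_smul_measure,
    integral_finsetSum_measure]
  · simp only [integral_dirac' _ _ hg, ENNReal.toReal_inv, ENNReal.toReal_natCast, smul_eq_mul,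
      one_div]
  · exact fun k _ => integrable_dirac' hg (by simp)

lemma empiricalMeasure_real_apply (F : ℕ → Ω) (n : ℕ) {E : Set Ω} (hE : MeasurableSet E) :
    (empiricalMeasure F n : Measure Ω).real E =
      (1 / ((n + 1 : ℕ) : ℝ)) *
        ∑ k ∈ Finset.range (n + 1), E.indicator (fun _ => (1 : ℝ)) (F k) := by
  rw [← integral_indicator_one hE,
    integral_empiricalMeasure F n (stronglyMeasurable_one.indicator hE)]
  rfl

def HasLimitingNaturalDistribution [PseudoEMetricSpace Ω] (F : ℕ → Ω) (μ : Measure Ω) : Prop :=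
  ∀ g : Ω → ℝ, (∃ L : NNReal, LipschitzWith L g) → (∃ M : ℝ, ∀ x, |g x| ≤ M) →
    Tendsto (fun X : ℕ => (1 / (X : ℝ)) * ∑ k ∈ Finset.range X, g (F k)) atTop (𝓝 (∫ x, g x ∂μ))

namespace HasLimitingNaturalDistribution

variable [PseudoEMetricSpace Ω] [OpensMeasurableSpace Ω] {F : ℕ → Ω} {μ : Measure Ω}
  [IsProbabilityMeasure μ]

theorem tendsto_empiricalMeasure (hF : HasLimitingNaturalDistribution F μ) :
    Tendsto (empiricalMeasure F) atTop (𝓝 (⟨μ, inferInstance⟩ : ProbabilityMeasure Ω)) := by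
  obtain ⟨x₀⟩ := nonempty_of_isProbabilityMeasure μ
  refine tendsto_iff_forall_lipschitz_integral_tendsto.mpr fun g ⟨C, hC⟩ hg => ?_
  have hbdd : ∃ M, ∀ x, |g x| ≤ M := ⟨|g x₀| + C, fun x => by
    have := (abs_sub_abs_le_abs_sub (g x) (g x₀)).trans (hC x x₀)
    linarith⟩
  simp only [ProbabilityMeasure.coe_mk,
    integral_empiricalMeasure F _ hg.choose_spec.continuous.stronglyMeasurable]
  exact (tendsto_add_atTop_iff_nat 1).mpr (hF g hg hbdd)

theorem tendsto_average_indicator (hF : HasLimitingNaturalDistribution F μ) {E : Set Ω}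
    (hE : MeasurableSet E) (hE_frontier : μ (frontier E) = 0) :
    Tendsto (fun X : ℕ => (1 / (X : ℝ)) *
        ∑ k ∈ Finset.range X, Set.indicator {k | F k ∈ E} (fun _ => (1 : ℝ)) k)
      atTop (𝓝 (μ.real E)) := by
  refine (tendsto_add_atTop_iff_nat 1).mp ?_
  have key : Tendsto (fun n => (empiricalMeasure F n : Measure Ω).real E) atTop (𝓝 (μ.real E)) :=
    (ENNReal.tendsto_toReal (measure_ne_top μ E)).comp
      (ProbabilityMeasure.tendsto_measure_of_null_frontier_of_tendsto'
        hF.tendsto_empiricalMeasure hE_frontier)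
  simp only [empiricalMeasure_real_apply F _ hE] at key
  exact key

end HasLimitingNaturalDistribution

end

section

variable {X ι : Type*} [TopologicalSpace X] {f : ι → X → ℝ}

theorem isOpen_setOf_forall_lt [Finite ι] (hf : ∀ i, Continuous (f i)) (a : ι → ℝ) :
    IsOpen {x | ∀ i, a i < f i x} := by
  simp only [Set.ofPred_forall]
  exact isOpen_iInter_of_finite fun i => isOpen_lt continuous_const (hf i)

theorem frontier_setOf_forall_lt_subset [Finite ι] (hf : ∀ i, Continuous (f i)) (a : ι → ℝ) :
    frontier {x | ∀ i, a i < f i x} ⊆ ⋃ i, {x | f i x = a i} := by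
  have hclosure : closure {x | ∀ i, a i < f i x} ⊆ {x | ∀ i, a i ≤ f i x} := by
    refine closure_minimal (fun x hx i => (hx i).le) ?_
    simp only [Set.ofPred_forall]
    exact isClosed_iInter fun i => isClosed_le continuous_const (hf i)
  rw [(isOpen_setOf_forall_lt hf a).frontier_eq]
  rintro x ⟨hx, hxS⟩
  obtain ⟨i, hi⟩ : ∃ i, f i x ≤ a i := by simpa using hxS
  exact Set.mem_iUnion.mpr ⟨i, le_antisymm hi (hclosure hx i)⟩

end

theorem stmt_2_general {D : ℕ}
    (F : ℕ → EuclideanSpace ℝ (Fin D))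
    (μ : Measure (EuclideanSpace ℝ (Fin D))) [IsProbabilityMeasure μ]
    (hlim : ∀ g : EuclideanSpace ℝ (Fin D) → ℝ, (∃ L : NNReal, LipschitzWith L g) →
      (∃ M : ℝ, ∀ x, |g x| ≤ M) →
      Tendsto (fun X : ℕ => (1 / (X : ℝ)) * ∑ k ∈ Finset.range X, g (F k))
        atTop (𝓝 (∫ x, g x ∂μ)))
    (α : EuclideanSpace ℝ (Fin D))
    (h : ∀ d : Fin D, μ {x | x d = α d} = 0) :
    Tendsto (fun X : ℕ => (1 / (X : ℝ)) *
        ∑ k ∈ Finset.range X,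
          Set.indicator {k : ℕ | ∀ d : Fin D, α d < F k d} (fun _ => (1 : ℝ)) k)
      atTop (𝓝 ((μ {x | ∀ d : Fin D, α d < x d}).toReal)) := by
  have hcoord (d : Fin D) : Continuous fun x : EuclideanSpace ℝ (Fin D) => x d := by fun_prop
  have hF : HasLimitingNaturalDistribution F μ := hlim
  exact hF.tendsto_average_indicator (isOpen_setOf_forall_lt hcoord α).measurableSet
    (measure_mono_null (frontier_setOf_forall_lt_subset hcoord α) (measure_iUnion_null h))

theorem stmt_2 {D : ℕ} (hD : 1 ≤ D)
    (F : ℕ → EuclideanSpace ℝ (Fin D))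
    (μ : Measure (EuclideanSpace ℝ (Fin D))) [IsProbabilityMeasure μ]
    (hlim : ∀ g : EuclideanSpace ℝ (Fin D) → ℝ, (∃ L : NNReal, LipschitzWith L g) →
      (∃ M : ℝ, ∀ x, |g x| ≤ M) →
      Tendsto (fun X : ℕ => (1 / (X : ℝ)) * ∑ k ∈ Finset.range X, g (F k))
        atTop (𝓝 (∫ x, g x ∂μ)))
    (α : EuclideanSpace ℝ (Fin D))
    (h : ∀ d : Fin D, μ {x | x d = α d} = 0) :
    Tendsto (fun X : ℕ => (1 / (X : ℝ)) *
        ∑ k ∈ Finset.range X,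
          Set.indicator {k : ℕ | ∀ d : Fin D, α d < F k d} (fun _ => (1 : ℝ)) k)
      atTop (𝓝 ((μ {x | ∀ d : Fin D, α d < x d}).toReal)) :=
  stmt_2_general F μ hlim α h
end

section
/- Let μ be a probability measure supported in a linear subspace V ⊆ ℝ^D. Suppose there exists ε > 0 such that |μ̂(ξ)| ≤ C·min(1, ‖ξ‖^{-ε}) for all ξ ∈ V, where μ̂(ξ) = ∫ e^{-2πi⟨ξ,x⟩} dμ(x). Then for every affine subspace α + H with H a subspace of ℝ^D not containing V and α ∈ ℝ^D, one has μ(α + H) = 0. -/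
open MeasureTheory Filter Topology

lemma abs_rpow_intInt {r : ℝ} (hr : -1 < r) {T : ℝ} (hT : 0 < T) :
    IntervalIntegrable (fun t : ℝ => |t| ^ r) volume (-T) T := by
  have hi1 : IntervalIntegrable (fun t : ℝ => |t| ^ r) volume 0 T := by
    apply (intervalIntegral.intervalIntegrable_rpow' hr).congr
    intro t ht
    rw [Set.uIoc_of_le hT.le] at ht
    simp [abs_of_nonneg ht.1.le]
  have hi2 : IntervalIntegrable (fun t : ℝ => |t| ^ r) volume (-T) 0 := by
    have := ((IntervalIntegrable.iff_comp_neg (by simp)).mp hi1)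
    simp only [abs_neg] at this
    simpa using this.symm
  exact hi2.trans hi1

lemma abs_rpow_integral {r : ℝ} (hr : -1 < r) {T : ℝ} (hT : 0 < T) :
    (∫ t in (-T)..T, |t| ^ r) = 2 * (T ^ (r + 1) / (r + 1)) := by
  have habs : Set.EqOn (fun t : ℝ => |t| ^ r) (fun t : ℝ => t ^ r) (Set.uIcc 0 T) := by
    intro t ht
    rw [Set.uIcc_of_le hT.le] at ht
    simp only
    rw [abs_of_nonneg ht.1]
  have hi1 : IntervalIntegrable (fun t : ℝ => |t| ^ r) volume 0 T := by
    apply (intervalIntegral.intervalIntegrable_rpow' hr).congr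
    intro t ht
    rw [Set.uIoc_of_le hT.le] at ht
    simp [abs_of_nonneg ht.1.le]
  have hi2 : IntervalIntegrable (fun t : ℝ => |t| ^ r) volume (-T) 0 := by
    have := ((IntervalIntegrable.iff_comp_neg (by simp)).mp hi1)
    simp only [abs_neg] at this
    simpa using this.symm
  have e1 : (∫ t in (0:ℝ)..T, |t| ^ r) = T ^ (r + 1) / (r + 1) := by
    rw [intervalIntegral.integral_congr habs, integral_rpow (Or.inl hr)]
    rw [Real.zero_rpow (by linarith)]
    ring
  have e2 : (∫ t in (-T)..(0:ℝ), |t| ^ r) = T ^ (r + 1) / (r + 1) := by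
    have : (∫ t in (0:ℝ)..T, |(-t)| ^ r) = ∫ t in (-T)..(0:ℝ), |t| ^ r := by
      simpa using intervalIntegral.integral_comp_neg (a := 0) (b := T) (fun t => |t| ^ r)
    rw [← this]
    simp_rw [abs_neg]
    exact e1
  rw [← intervalIntegral.integral_add_adjacent_intervals hi2 hi1, e1, e2]
  ring

lemma key_no_atom {D : ℕ}
    (μ : Measure (EuclideanSpace ℝ (Fin D))) [IsProbabilityMeasure μ]
    (ξ : EuclideanSpace ℝ (Fin D)) (c ε' M : ℝ) (hε0 : 0 < ε') (hε1 : ε' < 1)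
    (hb : ∀ t : ℝ, t ≠ 0 →
      ‖∫ x, Complex.exp (((2 * Real.pi * (t * (c - (inner ℝ ξ x : ℝ)))) : ℝ) * Complex.I) ∂μ‖
        ≤ M * |t| ^ (-ε')) :
    μ {x | (inner ℝ ξ x : ℝ) = c} = 0 := by
  have hpi := Real.pi_pos
  set u : EuclideanSpace ℝ (Fin D) → ℝ := fun x => c - (inner ℝ ξ x : ℝ) with hu
  have hucont : Continuous u := continuous_const.sub (continuous_inner.comp
    (continuous_const.prodMk continuous_id))
  set F : ℝ → EuclideanSpace ℝ (Fin D) → ℂ :=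
    fun t x => Complex.exp (((2 * Real.pi * (t * u x)) : ℝ) * Complex.I) with hF
  have hFnorm : ∀ t x, ‖F t x‖ = 1 := fun t x => Complex.norm_exp_ofReal_mul_I _
  have hFcont : Continuous (fun p : EuclideanSpace ℝ (Fin D) × ℝ => F p.2 p.1) := by
    apply Complex.continuous_exp.comp
    apply Continuous.mul _ continuous_const
    exact Complex.continuous_ofReal.comp
      (continuous_const.mul (continuous_snd.mul (hucont.comp continuous_fst)))
  set A : Set (EuclideanSpace ℝ (Fin D)) := {x | u x = 0} with hA
  have hAmeas : MeasurableSet A := (isClosed_eq hucont continuous_const).measurableSet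
  have hint : ∀ T : ℝ, Integrable (fun p : EuclideanSpace ℝ (Fin D) × ℝ => F p.2 p.1)
      (μ.prod (volume.restrict (Set.Ioc (-T) T))) := by
    intro T
    haveI : IsFiniteMeasure (volume.restrict (Set.Ioc (-T) T)) := by
      constructor
      rw [Measure.restrict_apply_univ, Real.volume_Ioc]
      exact ENNReal.ofReal_lt_top
    refine (integrable_const (1 : ℝ)).mono' hFcont.aestronglyMeasurable ?_
    filter_upwards with p
    rw [hFnorm]
  set S : ℝ → EuclideanSpace ℝ (Fin D) → ℂ := fun T x => ∫ t in (-T)..T, F t x with hS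
  -- value of S on A
  have hS_eq : ∀ T : ℝ, ∀ x, u x = 0 → S T x = 2 * T := by
    intro T x hux
    simp only [hS, hF, hux, mul_zero, Complex.ofReal_zero, zero_mul, Complex.exp_zero]
    rw [intervalIntegral.integral_const, sub_neg_eq_add, Complex.real_smul]
    push_cast; ring
  -- bound off A
  have hS_bound : ∀ T : ℝ, ∀ x, u x ≠ 0 → ‖S T x‖ ≤ (Real.pi * |u x|)⁻¹ := by
    intro T x hv
    set v := u x
    have hb0 : ((2 * Real.pi * v : ℝ) : ℂ) * Complex.I ≠ 0 := by
      apply mul_ne_zero _ Complex.I_ne_zero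
      simp only [ne_eq, Complex.ofReal_eq_zero]
      intro h
      rcases mul_eq_zero.1 h with h' | h'
      · nlinarith
      · exact hv h'
    have heq : ∀ t : ℝ, F t x
        = Complex.exp ((((2 * Real.pi * v : ℝ) : ℂ) * Complex.I) * (t : ℂ)) := by
      intro t; simp only [hF]; congr 1; push_cast; ring
    simp only [hS]
    rw [intervalIntegral.integral_congr (g := fun t : ℝ =>
        Complex.exp ((((2 * Real.pi * v : ℝ) : ℂ) * Complex.I) * (t : ℂ)))
        (fun t _ => heq t)]
    rw [integral_exp_mul_complex hb0, norm_div]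
    have h1 : ‖Complex.exp (((2 * Real.pi * v : ℝ) : ℂ) * Complex.I * (T : ℂ))‖ = 1 := by
      rw [show ((2 * Real.pi * v : ℝ) : ℂ) * Complex.I * (T : ℂ)
          = ((2 * Real.pi * v * T : ℝ) : ℂ) * Complex.I by push_cast; ring]
      exact Complex.norm_exp_ofReal_mul_I _
    have h2 : ‖Complex.exp (((2 * Real.pi * v : ℝ) : ℂ) * Complex.I * ((-T : ℝ) : ℂ))‖ = 1 := by
      rw [show ((2 * Real.pi * v : ℝ) : ℂ) * Complex.I * ((-T : ℝ) : ℂ)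
          = ((2 * Real.pi * v * (-T) : ℝ) : ℂ) * Complex.I by push_cast; ring]
      exact Complex.norm_exp_ofReal_mul_I _
    have h3 : ‖((2 * Real.pi * v : ℝ) : ℂ) * Complex.I‖ = 2 * Real.pi * |v| := by
      rw [norm_mul, Complex.norm_I, mul_one, Complex.norm_real, Real.norm_eq_abs,
        abs_mul, abs_mul]
      rw [abs_of_pos (by norm_num : (0:ℝ) < 2), abs_of_pos hpi]
    rw [h3]
    have hnum : ‖Complex.exp (((2 * Real.pi * v : ℝ) : ℂ) * Complex.I * (T:ℂ))
        - Complex.exp (((2 * Real.pi * v : ℝ) : ℂ) * Complex.I * ((-T:ℝ):ℂ))‖ ≤ 2 := by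
      calc _ ≤ _ := norm_sub_le _ _
        _ ≤ 2 := by rw [h1, h2]; norm_num
    have hposv : 0 < |v| := abs_pos.2 hv
    calc _ ≤ 2 / (2 * Real.pi * |v|) :=
          div_le_div_of_nonneg_right hnum
            (le_of_lt (by positivity : (0:ℝ) < 2 * Real.pi * |v|))
      _ = (Real.pi * |v|)⁻¹ := by
          field_simp
  -- trivial bound
  have hS_triv : ∀ T : ℝ, 0 ≤ T → ∀ x, ‖S T x‖ ≤ 2 * T := by
    intro T hT x
    have h := intervalIntegral.norm_integral_le_of_norm_le_const
      (a := -T) (b := T) (C := 1) (f := fun t => F t x)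
      (fun t _ => le_of_eq (hFnorm t x))
    calc ‖S T x‖ ≤ 1 * |T - (-T)| := h
      _ = 2 * T := by rw [abs_of_nonneg (by linarith : (0:ℝ) ≤ T - (-T))]; ring
  -- Fubini
  have swap : ∀ T : ℝ, 0 < T →
      (∫ x, S T x ∂μ) = ∫ t in (-T)..T, (∫ x, F t x ∂μ) := by
    intro T hT
    have hle : (-T) ≤ T := by linarith
    simp only [hS]
    rw [intervalIntegral.integral_of_le hle]
    simp_rw [intervalIntegral.integral_of_le hle]
    exact MeasureTheory.integral_integral_swap (hint T)
  -- measurability of x ↦ S T x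
  have hSmeas : ∀ T : ℝ, 0 < T → AEStronglyMeasurable (fun x => S T x) μ := by
    intro T hT
    have h1 := (hint T).integral_prod_left
    apply h1.aestronglyMeasurable.congr
    filter_upwards with x
    simp only [hS]
    rw [intervalIntegral.integral_of_le (by linarith : (-T) ≤ T)]
  have hnormT : ∀ T : ℝ, 0 < T → ‖((2:ℂ) * (T:ℂ))‖ = 2 * T := by
    intro T hT
    rw [show ((2:ℂ) * (T:ℂ)) = ((2*T : ℝ) : ℂ) by push_cast; ring, Complex.norm_real,
      Real.norm_eq_abs, abs_of_pos (by positivity)]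
  -- the averaged quantities
  set g : ℝ → EuclideanSpace ℝ (Fin D) → ℂ := fun T x => S T x / (2 * T) with hg
  -- dominated convergence: ∫ g T → μ A
  have hDCT : Tendsto (fun T => ∫ x, g T x ∂μ) atTop (𝓝 (((μ A).toReal : ℂ))) := by
    have hind : (((μ A).toReal : ℂ)) = ∫ x, A.indicator (fun _ => (1:ℂ)) x ∂μ := by
      rw [integral_indicator_const _ hAmeas]
      simp [measureReal_def]
    rw [hind]
    apply tendsto_integral_filter_of_dominated_convergence (bound := fun _ => (1:ℝ))
    · filter_upwards [eventually_gt_atTop (0:ℝ)] with T hT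
      have h1 := (hSmeas T hT).mul_const (((2:ℂ) * (T:ℂ))⁻¹)
      apply h1.congr
      filter_upwards with x
      simp only [hg]
      rw [div_eq_mul_inv]
    · filter_upwards [eventually_gt_atTop (0:ℝ)] with T hT
      filter_upwards with x
      simp only [hg, norm_div]
      rw [hnormT T hT, div_le_one (by positivity : (0:ℝ) < 2 * T)]
      exact hS_triv T hT.le x
    · exact integrable_const 1
    · filter_upwards with x
      by_cases hx : u x = 0
      · have hxA : x ∈ A := hx
        rw [Set.indicator_of_mem hxA]
        apply Tendsto.congr' (f₁ := fun _ => (1:ℂ))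
        · filter_upwards [eventually_gt_atTop (0:ℝ)] with T hT
          simp only [hg, hS_eq T x hx]
          rw [show ((2:ℂ) * T) = ((2*T:ℝ):ℂ) by push_cast; ring]
          rw [div_self]
          simp only [ne_eq, Complex.ofReal_eq_zero]
          positivity
        · exact tendsto_const_nhds
      · have hxA : x ∉ A := hx
        rw [Set.indicator_of_notMem hxA]
        apply squeeze_zero_norm' (a := fun T => (Real.pi * |u x|)⁻¹ / (2 * T))
        · filter_upwards [eventually_gt_atTop (0:ℝ)] with T hT
          simp only [hg, norm_div]
          rw [hnormT T hT]
          exact div_le_div_of_nonneg_right (hS_bound T x hx)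
            (le_of_lt (by positivity : (0:ℝ) < 2 * T))
        · apply Filter.Tendsto.div_atTop tendsto_const_nhds
          exact Tendsto.const_mul_atTop (by norm_num) tendsto_id
  -- decay: ∫ g T → 0
  have hM0 : 0 ≤ M := by
    have h := hb 1 one_ne_zero
    rw [abs_one, Real.one_rpow, mul_one] at h
    exact le_trans (norm_nonneg _) h
  have hJ : ∀ T : ℝ, 0 < T → ‖∫ x, g T x ∂μ‖ ≤ (M / (1 - ε')) * T ^ (-ε') := by
    intro T hT
    have hr : (-1:ℝ) < -ε' := by linarith
    have h1e : (0:ℝ) < -ε' + 1 := by linarith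
    have hgi : (∫ x, g T x ∂μ) = (∫ x, S T x ∂μ) / ((2:ℂ) * (T:ℂ)) := by
      simp only [hg]
      exact integral_div _ _
    have hb' : ∀ᵐ t ∂(volume.restrict (Set.uIoc (-T) T)),
        ‖∫ x, F t x ∂μ‖ ≤ M * |t| ^ (-ε') := by
      have h0 : ∀ᵐ t : ℝ ∂volume, t ≠ 0 := by
        rw [ae_iff]
        have : {t : ℝ | ¬ t ≠ 0} = {0} := by ext t; simp
        rw [this]
        exact Real.volume_singleton
      filter_upwards [ae_restrict_of_ae h0] with t ht
      exact hb t ht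
    have hbint : IntervalIntegrable (fun t : ℝ => M * |t| ^ (-ε')) volume (-T) T :=
      (abs_rpow_intInt hr hT).const_mul M
    have hP : (0:ℝ) < T ^ (-ε' + 1) := Real.rpow_pos_of_pos hT _
    have hnn : (0:ℝ) ≤ M * (2 * (T ^ (-ε' + 1) / (-ε' + 1))) :=
      mul_nonneg hM0 (mul_nonneg (by norm_num) (le_of_lt (div_pos hP h1e)))
    have h1 : ‖∫ t in (-T)..T, (∫ x, F t x ∂μ)‖
        ≤ M * (2 * (T ^ (-ε' + 1) / (-ε' + 1))) := by
      have h := intervalIntegral.norm_integral_le_abs_of_norm_le hb' hbint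
      rwa [intervalIntegral.integral_const_mul, abs_rpow_integral hr hT,
        abs_of_nonneg hnn] at h
    rw [hgi, norm_div, hnormT T hT, swap T hT]
    calc ‖∫ t in (-T)..T, (∫ x, F t x ∂μ)‖ / (2 * T)
        ≤ (M * (2 * (T ^ (-ε' + 1) / (-ε' + 1)))) / (2 * T) :=
          div_le_div_of_nonneg_right h1 (le_of_lt (by positivity : (0:ℝ) < 2 * T))
      _ = (M / (1 - ε')) * T ^ (-ε') := by
          have hne : (1 - ε') ≠ 0 := by linarith
          rw [Real.rpow_add hT, Real.rpow_one]
          field_simp [hne]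
          ring
  have hdecay : Tendsto (fun T => ∫ x, g T x ∂μ) atTop (𝓝 0) := by
    apply squeeze_zero_norm' (a := fun T => (M / (1 - ε')) * T ^ (-ε'))
    · filter_upwards [eventually_gt_atTop (0:ℝ)] with T hT
      exact hJ T hT
    · have h := (tendsto_rpow_neg_atTop hε0).const_mul (M / (1 - ε'))
      simpa using h
  have := tendsto_nhds_unique hDCT hdecay
  have h0 : (μ A).toReal = 0 := by exact_mod_cast this
  have hfin : μ A ≠ ⊤ := (measure_lt_top μ A).ne
  have : μ A = 0 := by
    rwa [ENNReal.toReal_eq_zero_iff, or_iff_left hfin] at h0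
  convert this using 2
  ext x
  simp only [hA, Set.mem_setOf_eq, hu]
  constructor
  · intro h; linarith
  · intro h; linarith

theorem stmt_4 {D : ℕ} (hD : 1 ≤ D)
    (μ : Measure (EuclideanSpace ℝ (Fin D))) [IsProbabilityMeasure μ]
    (V : Submodule ℝ (EuclideanSpace ℝ (Fin D)))
    (hsupp : μ ((V : Set (EuclideanSpace ℝ (Fin D)))ᶜ) = 0)
    (ε C : ℝ) (hε : 0 < ε) (hC : 0 < C)
    (hbound : ∀ ξ ∈ V, ξ ≠ 0 →
      ‖∫ x, Complex.exp ((-(2 * Real.pi * (inner ℝ ξ x : ℝ)) : ℝ) * Complex.I) ∂μ‖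
        ≤ C * min 1 (‖ξ‖ ^ (-ε)))
    (H : Submodule ℝ (EuclideanSpace ℝ (Fin D))) (hH : ¬ V ≤ H)
    (α : EuclideanSpace ℝ (Fin D)) :
    μ {x | x - α ∈ H} = 0 := by
  by_cases hne : ∃ y, y ∈ V ∧ y - α ∈ H
  · -- construct ξ ∈ V ∩ (V ⊓ H)ᗮ, ξ ≠ 0
    set W : Submodule ℝ (EuclideanSpace ℝ (Fin D)) := V ⊓ H with hW
    obtain ⟨v, hvV, hvH⟩ := SetLike.not_le_iff_exists.mp hH
    set ξ : EuclideanSpace ℝ (Fin D) := v - (W.orthogonalProjectionOnto v : EuclideanSpace ℝ (Fin D))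
      with hξdef
    have hprojW : (W.orthogonalProjectionOnto v : EuclideanSpace ℝ (Fin D)) ∈ W :=
      SetLike.coe_mem _
    have hξV : ξ ∈ V := V.sub_mem hvV (inf_le_left (a := V) (b := H) hprojW)
    have hξW : ξ ∈ Wᗮ := Submodule.sub_starProjection_mem_orthogonal (K := W) v
    have hξ0 : ξ ≠ 0 := by
      intro h
      rw [hξdef, sub_eq_zero] at h
      exact hvH (inf_le_right (a := V) (b := H) (h ▸ hprojW))
    have hnξ : (0:ℝ) < ‖ξ‖ := norm_pos_iff.mpr hξ0
    obtain ⟨a', ha'V, ha'H⟩ := hne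
    set c : ℝ := (inner ℝ ξ a' : ℝ) with hc
    -- parameters
    set ε' : ℝ := min ε (1/2) with hε'
    have hε'0 : 0 < ε' := lt_min hε (by norm_num)
    have hε'1 : ε' < 1 := lt_of_le_of_lt (min_le_right _ _) (by norm_num)
    have hε'ε : ε' ≤ ε := min_le_left _ _
    set M : ℝ := C * ‖ξ‖ ^ (-ε') with hM
    -- the decay hypothesis for key_no_atom
    have hb : ∀ t : ℝ, t ≠ 0 →
        ‖∫ x, Complex.exp (((2 * Real.pi * (t * (c - (inner ℝ ξ x : ℝ)))) : ℝ) * Complex.I) ∂μ‖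
          ≤ M * |t| ^ (-ε') := by
      intro t ht
      have hsplit : ∀ x : EuclideanSpace ℝ (Fin D),
          Complex.exp (((2 * Real.pi * (t * (c - (inner ℝ ξ x : ℝ)))) : ℝ) * Complex.I)
            = Complex.exp (((2 * Real.pi * (t * c) : ℝ)) * Complex.I)
              * Complex.exp ((-(2 * Real.pi * (inner ℝ (t • ξ) x : ℝ)) : ℝ) * Complex.I) := by
        intro x
        rw [← Complex.exp_add]
        congr 1
        have hin : (inner ℝ (t • ξ) x : ℝ) = t * (inner ℝ ξ x : ℝ) := real_inner_smul_left _ _ _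
        rw [hin]
        push_cast
        ring
      simp_rw [hsplit]
      rw [integral_const_mul, norm_mul, Complex.norm_exp_ofReal_mul_I, one_mul]
      have htξV : t • ξ ∈ V := V.smul_mem t hξV
      have htξ0 : t • ξ ≠ 0 := smul_ne_zero ht hξ0
      have h1 := hbound (t • ξ) htξV htξ0
      have hr : ‖t • ξ‖ = |t| * ‖ξ‖ := by rw [norm_smul, Real.norm_eq_abs]
      have hr0 : (0:ℝ) < ‖t • ξ‖ := norm_pos_iff.mpr htξ0
      have h2 : min 1 (‖t • ξ‖ ^ (-ε)) ≤ ‖t • ξ‖ ^ (-ε') := by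
        rcases le_or_gt 1 (‖t • ξ‖) with hone | hone
        · refine le_trans (min_le_right _ _) ?_
          exact Real.rpow_le_rpow_of_exponent_le hone (neg_le_neg hε'ε)
        · refine le_trans (min_le_left _ _) ?_
          exact Real.one_le_rpow_of_pos_of_le_one_of_nonpos hr0 hone.le (neg_nonpos.mpr hε'0.le)
      calc ‖∫ x, Complex.exp ((-(2 * Real.pi * (inner ℝ (t • ξ) x : ℝ)) : ℝ) * Complex.I) ∂μ‖
          ≤ C * min 1 (‖t • ξ‖ ^ (-ε)) := h1
        _ ≤ C * (‖t • ξ‖ ^ (-ε')) := by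
            exact mul_le_mul_of_nonneg_left h2 hC.le
        _ = M * |t| ^ (-ε') := by
            rw [hr, Real.mul_rpow (abs_nonneg t) (norm_nonneg ξ), hM]
            ring
    have hkey : μ {x | (inner ℝ ξ x : ℝ) = c} = 0 :=
      key_no_atom μ ξ c ε' M hε'0 hε'1 hb
    -- inclusion
    have hsub : {x : EuclideanSpace ℝ (Fin D) | x - α ∈ H}
        ⊆ ((V : Set (EuclideanSpace ℝ (Fin D)))ᶜ ∪ {x | (inner ℝ ξ x : ℝ) = c}) := by
      intro x hx
      by_cases hxV : x ∈ V
      · right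
        have hxa : x - a' ∈ W := by
          rw [hW, Submodule.mem_inf]
          constructor
          · exact V.sub_mem hxV ha'V
          · have : x - a' = (x - α) - (a' - α) := by abel
            rw [this]
            exact H.sub_mem hx ha'H
        have horth : (inner ℝ (x - a') ξ : ℝ) = 0 :=
          (Submodule.mem_orthogonal W ξ).mp hξW _ hxa
        have : (inner ℝ ξ (x - a') : ℝ) = 0 := by rwa [real_inner_comm]
        rw [inner_sub_right] at this
        exact sub_eq_zero.mp this
      · left; exact hxV
    have hle := (measure_mono (μ := μ) hsub).trans (measure_union_le _ _)
    rw [hsupp, hkey] at hle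
    simpa using hle
  · apply measure_mono_null _ hsupp
    intro x hx
    intro hxV
    exact hne ⟨x, hxV, hx⟩
end

section
/- Let γ_1, …, γ_N > 0 be distinct real numbers and c_1, …, c_N ∈ ℂ^D. Define F : ℝ^+ → ℝ^D by F(x) = Σ_n (c_n x^{iγ_n} + conj(c_n) x^{-iγ_n}). Let V_F be the span of a_n = 2Re(c_n), b_n = -2Im(c_n). Then for every subspace H ⊂ ℝ^D with V_F ⊄ H and every α ∈ ℝ^D, the logarithmic density δ({x ≥ 1 : F(x) ∈ α + H}) exists and equals 0. -/
open MeasureTheory Filter Topology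

private noncomputable def expChar (r : ℝ) : Multiplicative ℝ →* ℂ where
  toFun t := Complex.exp ((r : ℂ) * ((t.toAdd : ℝ) : ℂ) * Complex.I)
  map_one' := by simp
  map_mul' s t := by
    simp only [toAdd_mul]
    rw [← Complex.exp_add]
    congr 1
    push_cast
    ring

private lemma expChar_injective : Function.Injective expChar := by
  intro r r' h
  by_contra hne
  set t : ℝ := Real.pi / (r - r') with ht
  have h1 : Complex.exp ((r : ℂ) * (t : ℂ) * Complex.I)
      = Complex.exp ((r' : ℂ) * (t : ℂ) * Complex.I) := by
    have := DFunLike.congr_fun h (Multiplicative.ofAdd t)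
    simpa [expChar] using this
  have h2 : Complex.exp ((r : ℂ) * t * Complex.I - (r' : ℂ) * t * Complex.I) = 1 := by
    rw [Complex.exp_sub, h1, div_self (Complex.exp_ne_zero _)]
  have hrr : (r - r') * t = Real.pi := by
    rw [ht]
    field_simp
  have h3 : (r : ℂ) * t * Complex.I - (r' : ℂ) * t * Complex.I = (Real.pi : ℂ) * Complex.I := by
    rw [← Complex.ofReal_mul] at *
    push_cast
    rw [show ((r : ℂ) * t * Complex.I - (r' : ℂ) * t * Complex.I)
      = ((r - r') * t) * Complex.I by ring]
    norm_cast
    rw [hrr]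
  rw [h3, Complex.exp_pi_mul_I] at h2
  norm_num at h2

private lemma exp_lin_indep {ι : Type} [Fintype ι] (μ : ι → ℝ) (hμ : Function.Injective μ)
    (Z : ι → ℂ)
    (h : ∀ t : ℝ, ∑ i, Z i * Complex.exp ((μ i : ℂ) * (t : ℂ) * Complex.I) = 0) :
    ∀ i, Z i = 0 := by
  have li : LinearIndependent ℂ (fun i : ι => ⇑(expChar (μ i))) :=
    (linearIndependent_monoidHom (Multiplicative ℝ) ℂ).comp
      (fun i => expChar (μ i)) (expChar_injective.comp hμ)
  apply Fintype.linearIndependent_iff.mp li Z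
  funext t
  have := h t.toAdd
  simpa [expChar, Finset.sum_apply, Pi.smul_apply, smul_eq_mul] using this

private lemma countable_zero_set {f : ℝ → ℂ} (hf : AnalyticOnNhd ℝ f Set.univ)
    (hne : ∃ t, f t ≠ 0) : Set.Countable {x : ℝ | f x = 0} := by
  have hdisj : ∀ x : ℝ, Disjoint (𝓝[≠] x) (Filter.principal {y : ℝ | f y = 0}) := by
    intro x
    rcases (hf x (Set.mem_univ x)).eventually_eq_zero_or_eventually_ne_zero with h | h
    · exfalso
      obtain ⟨t, ht⟩ := hne
      exact ht (hf.eqOn_zero_of_preconnected_of_eventuallyEq_zero isPreconnected_univ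
        (Set.mem_univ x) h (Set.mem_univ t))
    · rw [Filter.disjoint_principal_right]
      exact h
  have h2 := isClosed_and_discrete_iff.mpr hdisj
  exact (HereditarilyLindelof_LindelofSets _).countable (isDiscrete_iff_discreteTopology.mp h2.2)

private lemma keyid (P Q g t : ℝ) :
    ((P : ℂ)/2 - (Q : ℂ)/2 * Complex.I) * Complex.exp ((g : ℂ) * (t : ℂ) * Complex.I)
      + ((P : ℂ)/2 + (Q : ℂ)/2 * Complex.I) * Complex.exp (-(g : ℂ) * (t : ℂ) * Complex.I)
      = ((P * Real.cos (g * t) + Q * Real.sin (g * t) : ℝ) : ℂ) := by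
  have h1 : (g : ℂ) * t * Complex.I = ((g * t : ℝ) : ℂ) * Complex.I := by push_cast; ring
  have h2 : -(g : ℂ) * t * Complex.I = ((-(g * t) : ℝ) : ℂ) * Complex.I := by push_cast; ring
  rw [h1, h2, Complex.exp_mul_I, Complex.exp_mul_I]
  rw [Complex.ofReal_neg, Complex.cos_neg, Complex.sin_neg]
  push_cast
  linear_combination (-(Q : ℂ) * Complex.sin ((g : ℂ) * (t : ℂ))) * Complex.I_sq

private lemma aux_sum_swap {D N : ℕ} (w αv : Fin D → ℝ) (a b : Fin N → Fin D → ℝ)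
    (cs sn : Fin N → ℝ) :
    ∑ d, ((∑ n, (a n d * cs n + b n d * sn n)) - αv d) * w d
      = ∑ n, ((∑ d, w d * a n d) * cs n + (∑ d, w d * b n d) * sn n) - ∑ d, w d * αv d := by
  simp only [sub_mul, Finset.sum_sub_distrib, Finset.sum_mul]
  congr 1
  · rw [Finset.sum_comm]
    refine Finset.sum_congr rfl fun n _ => ?_
    rw [← Finset.sum_add_distrib]
    exact Finset.sum_congr rfl fun d _ => by ring
  · exact Finset.sum_congr rfl fun d _ => by ring

theorem stmt_10 {N D : ℕ} (hN : 1 ≤ N) (hD : 1 ≤ D)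
    (γ : Fin N → ℝ) (hγ : Function.Injective γ) (hγpos : ∀ n, 0 < γ n)
    (c : Fin N → Fin D → ℂ)
    (a b : Fin N → EuclideanSpace ℝ (Fin D))
    (ha : ∀ n d, a n d = 2 * (c n d).re) (hb : ∀ n d, b n d = -2 * (c n d).im)
    (F : ℝ → EuclideanSpace ℝ (Fin D))
    (hF : ∀ x : ℝ, 0 < x → ∀ d, F x d =
      ∑ n : Fin N, (a n d * Real.cos (γ n * Real.log x) + b n d * Real.sin (γ n * Real.log x)))
    (H : Submodule ℝ (EuclideanSpace ℝ (Fin D)))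
    (hH : ¬ Submodule.span ℝ (Set.range a ∪ Set.range b) ≤ H)
    (α : EuclideanSpace ℝ (Fin D)) :
    Tendsto (fun X : ℝ => (1 / Real.log X) *
        ∫ x in Set.Icc 1 X,
          Set.indicator {x : ℝ | F x - α ∈ H} (fun _ => (1 : ℝ)) x / x)
      atTop (𝓝 0) := by
  classical
  have hinner : ∀ v u : EuclideanSpace ℝ (Fin D), (inner ℝ v u : ℝ) = ∑ d, v d * u d := by
    intro v u
    simp [PiLp.inner_apply, RCLike.inner_apply, starRingEnd_apply, star_trivial, mul_comm]
  -- Step A: find w orthogonal to H with some nonzero coefficient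
  have hkey : ∃ w : EuclideanSpace ℝ (Fin D), w ∈ Hᗮ ∧ ∃ n : Fin N,
      ((∑ d, w d * a n d) ≠ 0 ∨ (∑ d, w d * b n d) ≠ 0) := by
    by_contra hcon
    push_neg at hcon
    apply hH
    rw [Submodule.span_le]
    rintro u (hu | hu) <;> obtain ⟨n, rfl⟩ := hu
    · have : a n ∈ Hᗮᗮ := by
        rw [Submodule.mem_orthogonal]
        intro w hw
        rw [hinner]
        exact (hcon w hw n).1
      rwa [Submodule.orthogonal_orthogonal] at this
    · have : b n ∈ Hᗮᗮ := by
        rw [Submodule.mem_orthogonal]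
        intro w hw
        rw [hinner]
        exact (hcon w hw n).2
      rwa [Submodule.orthogonal_orthogonal] at this
  obtain ⟨w, hwH, n₀, hn₀⟩ := hkey
  -- set up complex exponential sum
  set μ : (Fin N ⊕ Fin N) ⊕ Unit → ℝ :=
    Sum.elim (Sum.elim γ (fun n => -γ n)) (fun _ => 0) with hμdef
  set Z : (Fin N ⊕ Fin N) ⊕ Unit → ℂ :=
    Sum.elim (Sum.elim (fun n => ((∑ d, w d * a n d : ℝ) : ℂ)/2 - ((∑ d, w d * b n d : ℝ) : ℂ)/2 * Complex.I)
      (fun n => ((∑ d, w d * a n d : ℝ) : ℂ)/2 + ((∑ d, w d * b n d : ℝ) : ℂ)/2 * Complex.I))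
      (fun _ => -((∑ d, w d * α d : ℝ) : ℂ)) with hZdef
  set Hf : ℝ → ℂ := fun t => ∑ i, Z i * Complex.exp ((μ i : ℂ) * (t : ℂ) * Complex.I) with hHfdef
  have hg : ∀ t : ℝ, Hf t =
      (((∑ n, ((∑ d, w d * a n d) * Real.cos (γ n * t) + (∑ d, w d * b n d) * Real.sin (γ n * t)))
        - ∑ d, w d * α d : ℝ) : ℂ) := by
    intro t
    rw [hHfdef]
    show (∑ i, Z i * Complex.exp ((μ i : ℂ) * (t : ℂ) * Complex.I)) = _
    rw [Fintype.sum_sum_type, Fintype.sum_sum_type]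
    simp only [hZdef, hμdef, Sum.elim_inl, Sum.elim_inr]
    rw [← Finset.sum_add_distrib]
    have hterm : ∀ n : Fin N,
        (((∑ d, w d * a n d : ℝ) : ℂ)/2 - ((∑ d, w d * b n d : ℝ) : ℂ)/2 * Complex.I)
            * Complex.exp ((γ n : ℂ) * (t : ℂ) * Complex.I)
          + (((∑ d, w d * a n d : ℝ) : ℂ)/2 + ((∑ d, w d * b n d : ℝ) : ℂ)/2 * Complex.I)
            * Complex.exp (((-γ n : ℝ) : ℂ) * (t : ℂ) * Complex.I)
        = (((∑ d, w d * a n d) * Real.cos (γ n * t)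
            + (∑ d, w d * b n d) * Real.sin (γ n * t) : ℝ) : ℂ) := by
      intro n
      rw [Complex.ofReal_neg]
      exact keyid _ _ _ _
    rw [Finset.sum_congr rfl fun n _ => hterm n]
    push_cast
    simp [Complex.exp_zero]
    ring
  have hμinj : Function.Injective μ := by
    have h0 : ∀ n, γ n ≠ 0 := fun n => ne_of_gt (hγpos n)
    rintro ((n | n) | u) ((m | m) | v) h <;>
      simp only [hμdef, Sum.elim_inl, Sum.elim_inr] at h
    · rw [hγ h]
    · exact absurd (neg_pos.mp (h ▸ hγpos n)) (not_lt.2 (hγpos m).le)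
    · exact absurd h (h0 n)
    · exact absurd (neg_pos.mp (h.symm ▸ hγpos m)) (not_lt.2 (hγpos n).le)
    · rw [hγ (neg_injective h)]
    · exact absurd (neg_eq_zero.mp h) (h0 n)
    · exact absurd h.symm (h0 m)
    · exact absurd (neg_eq_zero.mp h.symm) (h0 m)
    · rfl
  have hZne : Z (Sum.inl (Sum.inl n₀)) ≠ 0 := by
    simp only [hZdef, Sum.elim_inl]
    intro h
    have h2 : ((∑ d, w d * a n₀ d : ℝ) : ℂ) = ((∑ d, w d * b n₀ d : ℝ) : ℂ) * Complex.I := by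
      linear_combination 2 * h
    have hre := congrArg Complex.re h2
    have him := congrArg Complex.im h2
    simp [Complex.mul_re, Complex.mul_im] at hre him
    rcases hn₀ with h' | h'
    · exact h' hre
    · exact h' him.symm
  have hexp : ∀ r : ℝ, AnalyticOnNhd ℝ (fun t : ℝ => Complex.exp ((r : ℂ) * (t : ℂ) * Complex.I))
      Set.univ := by
    intro r
    have h1 : AnalyticOnNhd ℝ (fun t : ℝ => t • ((r : ℂ) * Complex.I)) Set.univ :=
      fun x _ => (ContinuousLinearMap.toSpanSingleton ℝ ((r : ℂ) * Complex.I)).analyticAt x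
    have h2 : AnalyticOnNhd ℝ (Complex.exp) Set.univ :=
      analyticOnNhd_cexp.restrictScalars
    have heq : (fun t : ℝ => Complex.exp ((r : ℂ) * (t : ℂ) * Complex.I))
        = (Complex.exp ∘ fun t : ℝ => t • ((r : ℂ) * Complex.I)) := by
      funext t
      simp only [Function.comp_apply, Complex.real_smul]
      congr 1
      ring
    rw [heq]
    exact h2.comp h1 (Set.mapsTo_univ _ _)
  have han : AnalyticOnNhd ℝ Hf Set.univ := by
    rw [hHfdef]
    apply Finset.analyticOnNhd_fun_sum
    intro i _
    exact analyticOnNhd_const.mul (hexp (μ i))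
  have hne : ∃ t : ℝ, Hf t ≠ 0 := by
    by_contra hcon
    push_neg at hcon
    exact hZne (exp_lin_indep μ hμinj Z hcon (Sum.inl (Sum.inl n₀)))
  have hcount : Set.Countable {t : ℝ | Hf t = 0} := countable_zero_set han hne
  have hpoint : ∀ x : ℝ, 1 ≤ x → F x - α ∈ H → Hf (Real.log x) = 0 := by
    intro x hx hmem
    have hxpos : (0 : ℝ) < x := lt_of_lt_of_le zero_lt_one hx
    rw [hg, Complex.ofReal_eq_zero]
    have h0 : (inner ℝ (F x - α) w : ℝ) = 0 := Submodule.inner_right_of_mem_orthogonal hmem hwH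
    rw [hinner] at h0
    have hFd : ∀ d, (F x - α) d = (∑ n, (a n d * Real.cos (γ n * Real.log x)
        + b n d * Real.sin (γ n * Real.log x))) - α d := by
      intro d
      rw [PiLp.sub_apply, hF x hxpos d]
    have heq : ∑ d, (F x - α) d * w d
        = ∑ d, ((∑ n, (a n d * Real.cos (γ n * Real.log x)
            + b n d * Real.sin (γ n * Real.log x))) - α d) * w d :=
      Finset.sum_congr rfl fun d _ => by rw [hFd d]
    rw [heq, aux_sum_swap] at h0
    exact h0
  have hzero : ∀ X : ℝ, (∫ x in Set.Icc 1 X,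
      Set.indicator {x : ℝ | F x - α ∈ H} (fun _ => (1 : ℝ)) x / x) = 0 := by
    intro X
    apply integral_eq_zero_of_ae
    rw [Filter.EventuallyEq, ae_restrict_iff' measurableSet_Icc]
    rw [MeasureTheory.ae_iff]
    refine measure_mono_null ?_ ((hcount.image Real.exp).measure_zero _)
    intro x hx
    simp only [Set.mem_setOf_eq, Classical.not_imp, Pi.zero_apply] at hx
    obtain ⟨hxIcc, hne0⟩ := hx
    have hxS : x ∈ {x : ℝ | F x - α ∈ H} := by
      by_contra hxS
      rw [Set.indicator_of_notMem hxS] at hne0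
      simp at hne0
    exact ⟨Real.log x, hpoint x hxIcc.1 hxS,
      Real.exp_log (lt_of_lt_of_le zero_lt_one hxIcc.1)⟩
  have hfun : (fun X : ℝ => (1 / Real.log X) *
      ∫ x in Set.Icc 1 X,
        Set.indicator {x : ℝ | F x - α ∈ H} (fun _ => (1 : ℝ)) x / x) = fun _ => (0 : ℝ) := by
    funext X
    rw [hzero X, mul_zero]
  rw [hfun]
  exact tendsto_const_nhds
end
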